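/- (Lemma 1 of the paper, vector form.) Let ν be a probability measure on ℝⁿ with finite first moment and mean μ = ∫ x dν(x), and let f : ℝⁿ → ℝᵐ be differentiable with each component function f⁽ᵏ⁾ : ℝⁿ → ℝ either convex on ℝⁿ or concave on ℝⁿ, and each f⁽ᵏ⁾ integrable with respect to ν. Then for every a ∈ ℝⁿ, ∫ ‖f(x) − ℓ_μ f(x)‖₁ dν(x) ≤ ∫ ‖f(x) − ℓ_a f(x)‖₁ dν(x), i.e., among all linearization points, the mean μ of ν minimizes the expected 1-norm linearization error. -/

import Mathlib

/-!
For a convex component `g`, every linearization `ℓ_b g` lies below `g`, so the error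
`|g - ℓ_b g|` is just `g - ℓ_b g`; as `ℓ_b g` is affine, its `ν`-expectation is
`∫ g dν - ℓ_b g(μ)`. The supporting-hyperplane inequality `ℓ_a g(μ) ≤ g(μ) = ℓ_μ g(μ)` then
shows that `b = μ` is optimal. Concave components reduce to convex ones by negation, and the
expected 1-norm error is the sum of the componentwise expected errors.
-/

open MeasureTheory Set

noncomputable section

variable {E F G : Type*} [NormedAddCommGroup E] [NormedSpace ℝ E]
  [NormedAddCommGroup F] [NormedSpace ℝ F] [NormedAddCommGroup G] [NormedSpace ℝ G]

def linearization (f : E → F) (a x : E) : F := f a + fderiv ℝ f a (x - a)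

@[simp]
lemma linearization_self (f : E → F) (a : E) : linearization f a a = f a := by
  simp [linearization]

lemma linearization_neg (f : E → F) (a x : E) :
    linearization (-f) a x = -linearization f a x := by
  simp only [linearization, Pi.neg_apply, fderiv_neg, neg_apply, neg_add]

lemma ContinuousLinearMap.map_linearization (p : F →L[ℝ] G) {f : E → F} {a : E}
    (hf : DifferentiableAt ℝ f a) (x : E) :
    p (linearization f a x) = linearization (fun y => p (f y)) a x := by
  rw [linearization, linearization, ← Function.comp_def,
    (p.hasFDerivAt.comp a hf.hasFDerivAt).fderiv]
  simp

theorem ConvexOn.linearization_le {s : Set E} {g : E → ℝ} (hc : ConvexOn ℝ s g) {a x : E}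
    (ha : a ∈ s) (hx : x ∈ s) (hg : DifferentiableAt ℝ g a) :
    linearization g a x ≤ g x := by
  have hseg : ConvexOn ℝ (Icc (0 : ℝ) 1) (g ∘ AffineMap.lineMap a x) :=
    (hc.comp_affineMap _).subset (fun _ ht => hc.1.lineMap_mem ha hx ht) (convex_Icc 0 1)
  have hderiv : HasDerivAt (g ∘ AffineMap.lineMap a x) (fderiv ℝ g a (x - a)) (0 : ℝ) :=
    hg.hasFDerivAt.comp_hasDerivAt_of_eq 0 AffineMap.hasDerivAt_lineMap
      (AffineMap.lineMap_apply_zero a x).symm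
  have hslope := hseg.le_slope_of_hasDerivAt (by simp) (by simp) one_pos hderiv
  simp only [slope_def_field, Function.comp_apply, AffineMap.lineMap_apply_one,
    AffineMap.lineMap_apply_zero, sub_zero, div_one] at hslope
  rw [linearization]
  linarith

variable [MeasurableSpace E] {ν : Measure E} [IsProbabilityMeasure ν]

lemma integrable_linearization (hmom : Integrable (fun x => x) ν) (f : E → F) (a : E) :
    Integrable (linearization f a) ν :=
  (integrable_const _).add ((fderiv ℝ f a).integrable_comp (hmom.sub (integrable_const a)))

variable [CompleteSpace E]

lemma integral_linearization [CompleteSpace F] (hmom : Integrable (fun x => x) ν)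
    (f : E → F) (a : E) :
    ∫ x, linearization f a x ∂ν = linearization f a (∫ x, x ∂ν) := by
  have hsub : Integrable (fun x => x - a) ν := hmom.sub (integrable_const a)
  simp only [linearization]
  rw [integral_add (integrable_const _) ((fderiv ℝ f a).integrable_comp hsub),
    (fderiv ℝ f a).integral_comp_comm hsub, integral_sub hmom (integrable_const a)]
  simp

lemma ConvexOn.integral_abs_sub_linearization {g : E → ℝ} (hc : ConvexOn ℝ univ g)
    (hint : Integrable g ν) (hmom : Integrable (fun x => x) ν) {b : E}
    (hg : DifferentiableAt ℝ g b) :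
    ∫ x, |g x - linearization g b x| ∂ν = ∫ x, g x ∂ν - linearization g b (∫ x, x ∂ν) := by
  have hnonneg x : 0 ≤ g x - linearization g b x :=
    sub_nonneg.2 (hc.linearization_le (mem_univ b) (mem_univ x) hg)
  simp_rw [abs_of_nonneg (hnonneg _)]
  rw [integral_sub hint (integrable_linearization hmom g b), integral_linearization hmom]

lemma ConvexOn.integral_abs_sub_linearization_mean_le {g : E → ℝ} (hc : ConvexOn ℝ univ g)
    (hg : Differentiable ℝ g) (hint : Integrable g ν) (hmom : Integrable (fun x => x) ν)
    (a : E) :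
    ∫ x, |g x - linearization g (∫ x, x ∂ν) x| ∂ν ≤ ∫ x, |g x - linearization g a x| ∂ν := by
  rw [hc.integral_abs_sub_linearization hint hmom (hg _),
    hc.integral_abs_sub_linearization hint hmom (hg a), linearization_self]
  linarith [hc.linearization_le (mem_univ a) (mem_univ (∫ x, x ∂ν)) (hg a)]

lemma ConcaveOn.integral_abs_sub_linearization_mean_le {g : E → ℝ} (hc : ConcaveOn ℝ univ g)
    (hg : Differentiable ℝ g) (hint : Integrable g ν) (hmom : Integrable (fun x => x) ν)
    (a : E) :
    ∫ x, |g x - linearization g (∫ x, x ∂ν) x| ∂ν ≤ ∫ x, |g x - linearization g a x| ∂ν := by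
  have habs b x : |(-g) x - linearization (-g) b x| = |g x - linearization g b x| := by
    rw [linearization_neg, Pi.neg_apply, ← abs_neg]
    ring_nf
  simpa only [habs] using hc.neg.integral_abs_sub_linearization_mean_le hg.neg hint.neg hmom a

end

/-- Lemma 1 of the paper (vector form): if every component `f⁽ᵏ⁾` of the differentiable
map `f` is globally convex or concave and integrable w.r.t. the probability measure `ν`
with mean `μ`, then among all linearization points the mean `μ` minimizes the expected
1-norm linearization error:
`∫ ‖f − ℓ_μ f‖₁ dν ≤ ∫ ‖f − ℓ_a f‖₁ dν` for every `a`. -/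
theorem mean_minimizes_expected_one_norm_linearization_error {n m : ℕ}
    (ν : Measure (EuclideanSpace ℝ (Fin n))) [IsProbabilityMeasure ν]
    (hmom1 : Integrable (fun x => x) ν)
    (μ : EuclideanSpace ℝ (Fin n)) (hμ : μ = ∫ x, x ∂ν)
    (f : EuclideanSpace ℝ (Fin n) → EuclideanSpace ℝ (Fin m))
    (hf : Differentiable ℝ f)
    (hconvconc : ∀ k : Fin m,
      ConvexOn ℝ Set.univ (fun x => f x k) ∨ ConcaveOn ℝ Set.univ (fun x => f x k))
    (hint : ∀ k : Fin m, Integrable (fun x => f x k) ν) :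
    ∀ a : EuclideanSpace ℝ (Fin n),
      ∫ x, ∑ k, |f x k - (f μ + fderiv ℝ f μ (x - μ)) k| ∂ν
        ≤ ∫ x, ∑ k, |f x k - (f a + fderiv ℝ f a (x - a)) k| ∂ν := by
  intro a
  subst hμ
  have hcoord b x k : (f b + fderiv ℝ f b (x - b)) k = linearization (fun y => f y k) b x :=
    (EuclideanSpace.proj k).map_linearization (hf b) x
  have hdiff k : Differentiable ℝ (fun y => f y k) :=
    fun y => ((EuclideanSpace.proj k).differentiableAt.comp y (hf y) :)
  have hterm b k : Integrable (fun x => |f x k - linearization (fun y => f y k) b x|) ν :=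
    ((hint k).sub (integrable_linearization hmom1 _ b)).abs
  simp_rw [hcoord]
  rw [integral_finsetSum _ fun k _ => hterm _ k, integral_finsetSum _ fun k _ => hterm a k]
  refine Finset.sum_le_sum fun k _ => ?_
  rcases hconvconc k with hc | hc <;>
    exact hc.integral_abs_sub_linearization_mean_le (hdiff k) (hint k) hmom1 a
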